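/- Let Γ be a (discrete) group, let F ⊆ Γ ∖ {e} be a finite subset, let z : F → ℂ, and set X = Σ_{f ∈ F} z_f λ_Γ(f), a bounded operator on ℓ²(Γ, ℂ). Suppose C ⊆ Γ satisfies fC ∩ C = ∅ for all f ∈ F, set D = Γ ∖ C, and let γ_1, …, γ_N ∈ Γ be elements such that the sets γ_1 D, …, γ_N D are pairwise disjoint. Then ‖(1/N) Σ_{j=1}^N λ_Γ(γ_j) X λ_Γ(γ_j)⁻¹‖ ≤ (2/√N) ‖X‖. -/

import Mathlib

/-!
Let `P` and `Q` be the projections of `ℓ²(Γ)` onto `ℓ²(C)` and `ℓ²(D)`. Since `fC ∩ C = ∅` for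
`f ∈ F`, `PXP = 0`, hence `X = QX + PXQ`. Conjugating by `λ(γ_j)` turns `Q` into the projection
`Q_j` onto `ℓ²(γ_j D)`, and these are mutually orthogonal. By the C⋆-identity,
`‖∑ Q_j a_j‖² = ‖∑ a_j⋆ Q_j a_j‖ ≤ ∑ ‖a_j‖²`, and likewise for `∑ a_j Q_j` after taking adjoints;
so each of the two sums coming from `X = QX + PXQ` has norm at most `√N ‖X‖`.
-/

open scoped ENNReal

noncomputable section

set_option maxHeartbeats 1000000

abbrev l2 (Γ : Type*) := lp (fun _ : Γ => ℂ) 2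

def lamAux {Γ : Type*} [Group Γ] (γ : Γ) (f : l2 Γ) : l2 Γ :=
  ⟨fun x => f (γ⁻¹ * x), by
    apply memℓp_gen
    have h1 : Summable fun i : Γ => ‖f i‖ ^ (2 : ℝ≥0∞).toReal :=
      (lp.memℓp f).summable (by norm_num)
    exact (Equiv.mulLeft γ⁻¹).summable_iff.mpr h1⟩

theorem lamAux_apply {Γ : Type*} [Group Γ] (γ : Γ) (f : l2 Γ) (x : Γ) :
    lamAux γ f x = f (γ⁻¹ * x) := rfl

theorem lamAux_norm {Γ : Type*} [Group Γ] (γ : Γ) (f : l2 Γ) : ‖lamAux γ f‖ = ‖f‖ := by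
  rw [lp.norm_eq_tsum_rpow (by norm_num) (lamAux γ f), lp.norm_eq_tsum_rpow (by norm_num) f]
  congr 1
  have h := (Equiv.mulLeft γ⁻¹).tsum_eq (fun i : Γ => ‖f i‖ ^ (2 : ℝ≥0∞).toReal)
  exact h

def lam (Γ : Type*) [Group Γ] (γ : Γ) : l2 Γ →L[ℂ] l2 Γ :=
  LinearMap.mkContinuous
    { toFun := lamAux γ
      map_add' := fun f g => lp.ext rfl
      map_smul' := fun c f => lp.ext rfl }
    1 (fun f => by rw [one_mul]; exact le_of_eq (lamAux_norm γ f))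

def Cred (Γ : Type*) [Group Γ] : Set (l2 Γ →L[ℂ] l2 Γ) :=
  closure (Submodule.span ℂ (Set.range (lam Γ)) : Set (l2 Γ →L[ℂ] l2 Γ))

def deltaE (Γ : Type*) [Group Γ] : l2 Γ :=
  letI := Classical.decEq Γ
  lp.single 2 (1 : Γ) (1 : ℂ)

def IsPowersGroup (Γ : Type*) [Group Γ] : Prop :=
  ∀ (F : Finset Γ), (1 : Γ) ∉ F → ∀ N : ℕ, 1 ≤ N →
    ∃ (C D : Set Γ) (g : Fin N → Γ),
      C ∪ D = Set.univ ∧ C ∩ D = ∅ ∧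
      (∀ f ∈ F, (fun x => f * x) '' C ∩ C = ∅) ∧
      (∀ j k : Fin N, j ≠ k → (fun x => g j * x) '' D ∩ (fun x => g k * x) '' D = ∅)

section StarProjection

variable {A : Type*} [NonUnitalNormedRing A] [StarRing A] [CStarRing A]
  {ι : Type*} [Fintype ι] {p : ι → A}

theorem norm_sum_starProjection_mul_sq_le (hp : ∀ i, IsStarProjection (p i))
    (horth : Pairwise fun i j => p i * p j = 0) (a : ι → A) :
    ‖∑ i, p i * a i‖ ^ 2 ≤ ∑ i, ‖a i‖ ^ 2 := by
  have hdiag : star (∑ i, p i * a i) * ∑ i, p i * a i = ∑ i, star (p i * a i) * (p i * a i) := by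
    rw [star_sum, Finset.sum_mul_sum]
    refine Finset.sum_congr rfl fun i _ => Finset.sum_eq_single i (fun j _ hji => ?_) (by simp)
    rw [star_mul, (hp i).isSelfAdjoint.star_eq, mul_assoc, ← mul_assoc (p i), horth hji.symm,
      zero_mul, mul_zero]
  rw [sq, ← CStarRing.norm_star_mul_self, hdiag]
  refine (norm_sum_le _ _).trans (Finset.sum_le_sum fun i _ => ?_)
  rw [CStarRing.norm_star_mul_self, ← sq]
  gcongr
  exact (norm_mul_le _ _).trans (mul_le_of_le_one_left (norm_nonneg _) ((hp i).norm_le))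

theorem norm_sum_starProjection_mul_le (hp : ∀ i, IsStarProjection (p i))
    (horth : Pairwise fun i j => p i * p j = 0) {a : ι → A} {M : ℝ} (hM : ∀ i, ‖a i‖ ≤ M) :
    ‖∑ i, p i * a i‖ ≤ √(Fintype.card ι) * M := by
  rcases isEmpty_or_nonempty ι with _ | ⟨⟨i₀⟩⟩
  · simp
  have hM₀ : 0 ≤ M := (norm_nonneg _).trans (hM i₀)
  rw [← Real.sqrt_sq hM₀, ← Real.sqrt_mul (Nat.cast_nonneg _), Real.le_sqrt (norm_nonneg _)
    (by positivity)]
  calc ‖∑ i, p i * a i‖ ^ 2 ≤ ∑ i, ‖a i‖ ^ 2 := norm_sum_starProjection_mul_sq_le hp horth a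
    _ ≤ ∑ _i : ι, M ^ 2 := by gcongr with i; exact hM i
    _ = Fintype.card ι * M ^ 2 := by simp

theorem norm_sum_mul_starProjection_le (hp : ∀ i, IsStarProjection (p i))
    (horth : Pairwise fun i j => p i * p j = 0) {a : ι → A} {M : ℝ} (hM : ∀ i, ‖a i‖ ≤ M) :
    ‖∑ i, a i * p i‖ ≤ √(Fintype.card ι) * M := by
  have hstar : star (∑ i, a i * p i) = ∑ i, p i * star (a i) := by
    simp only [star_sum, star_mul, (hp _).isSelfAdjoint.star_eq]
  rw [← norm_star, hstar]
  exact norm_sum_starProjection_mul_le hp horth fun i => (norm_star (a i)).trans_le (hM i)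

end StarProjection

theorem eq_mul_add_mul_mul_of_mul_mul_eq_zero {R : Type*} [Ring R] {p q a : R}
    (hpq : p + q = 1) (ha : p * a * p = 0) : a = q * a + p * a * q := by
  calc a = p * a * (p + q) + q * a := by rw [hpq, mul_one, ← add_mul, hpq, one_mul]
    _ = q * a + p * a * q + p * a * p := by noncomm_ring
    _ = q * a + p * a * q := by rw [ha, add_zero]

section IndicatorProj

variable {α : Type*}

def indicatorProj (S : Set α) : l2 α →L[ℂ] l2 α :=
  LinearMap.mkContinuous
    { toFun := fun f => ⟨S.indicator f, (lp.memℓp f).mono' (norm_indicator_le_norm_self f)⟩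
      map_add' := fun f g => lp.ext (S.indicator_add f g)
      map_smul' := fun c f => lp.ext (S.indicator_const_smul c f) }
    1 fun f => by
      rw [one_mul]
      exact lp.norm_mono two_ne_zero (norm_indicator_le_norm_self f)

theorem indicatorProj_apply (S : Set α) (f : l2 α) (x : α) :
    indicatorProj S f x = S.indicator f x := rfl

theorem indicatorProj_mul_indicatorProj (S T : Set α) :
    indicatorProj S * indicatorProj T = indicatorProj (S ∩ T) := by
  ext f x
  exact congrFun (Set.indicator_indicator S T f) x

theorem indicatorProj_empty : indicatorProj (∅ : Set α) = 0 := by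
  ext f x
  simp [indicatorProj_apply]

theorem indicatorProj_add_indicatorProj_compl (S : Set α) :
    indicatorProj S + indicatorProj Sᶜ = 1 := by
  ext f x
  exact congrFun (S.indicator_self_add_compl f) x

theorem isStarProjection_indicatorProj (S : Set α) : IsStarProjection (indicatorProj S) where
  isIdempotentElem := by
    rw [IsIdempotentElem, indicatorProj_mul_indicatorProj, Set.inter_self]
  isSelfAdjoint := by
    rw [ContinuousLinearMap.isSelfAdjoint_iff_isSymmetric]
    intro f g
    simp only [ContinuousLinearMap.coe_coe, lp.inner_eq_tsum]
    refine tsum_congr fun x => ?_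
    by_cases hx : x ∈ S <;> simp [indicatorProj_apply, hx]

theorem indicatorProj_mul_indicatorProj_of_disjoint {S T : Set α} (h : Disjoint S T) :
    indicatorProj S * indicatorProj T = 0 := by
  rw [indicatorProj_mul_indicatorProj, h.inter_eq, indicatorProj_empty]

end IndicatorProj

section LeftRegular

variable {Γ : Type*} [Group Γ]

theorem lam_apply (γ : Γ) (f : l2 Γ) (x : Γ) : lam Γ γ f x = f (γ⁻¹ * x) := rfl

def lamEquiv (γ : Γ) : l2 Γ ≃ₗᵢ[ℂ] l2 Γ where
  toLinearMap := (lam Γ γ).toLinearMap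
  invFun := lam Γ γ⁻¹
  left_inv f := lp.ext <| funext fun x => by simp [lam_apply]
  right_inv f := lp.ext <| funext fun x => by simp [lam_apply]
  norm_map' := lamAux_norm γ

def lamConj (γ : Γ) : (l2 Γ →L[ℂ] l2 Γ) ≃⋆ₐ[ℂ] (l2 Γ →L[ℂ] l2 Γ) :=
  (lamEquiv γ).conjStarAlgEquiv

theorem lamConj_apply (γ : Γ) (Y : l2 Γ →L[ℂ] l2 Γ) :
    lamConj γ Y = lam Γ γ * Y * lam Γ γ⁻¹ := rfl

theorem lam_mul_lam_inv (γ : Γ) : lam Γ γ * lam Γ γ⁻¹ = 1 := by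
  ext f x
  simp [lam_apply]

theorem lam_mul_indicatorProj (γ : Γ) (S : Set Γ) :
    lam Γ γ * indicatorProj S = indicatorProj ((γ * ·) '' S) * lam Γ γ := by
  ext f x
  change S.indicator f (γ⁻¹ * x) = ((γ * ·) '' S).indicator (lam Γ γ f) x
  rw [Set.image_mul_left]
  exact (Set.indicator_comp_right (γ⁻¹ * ·)).symm

theorem lamConj_indicatorProj (γ : Γ) (S : Set Γ) :
    lamConj γ (indicatorProj S) = indicatorProj ((γ * ·) '' S) := by
  rw [lamConj_apply, lam_mul_indicatorProj, mul_assoc, lam_mul_lam_inv, mul_one]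

theorem indicatorProj_mul_lam_mul_indicatorProj {γ : Γ} {S : Set Γ}
    (h : (γ * ·) '' S ∩ S = ∅) : indicatorProj S * lam Γ γ * indicatorProj S = 0 := by
  rw [mul_assoc, lam_mul_indicatorProj, ← mul_assoc, indicatorProj_mul_indicatorProj,
    Set.inter_comm, h, indicatorProj_empty, zero_mul]

end LeftRegular

section PowersEstimate

variable {Γ : Type*} [Group Γ]

theorem indicatorProj_mul_sum_lam_mul_indicatorProj (F : Finset Γ) (z : Γ → ℂ) {C : Set Γ}
    (hC : ∀ f ∈ F, (f * ·) '' C ∩ C = ∅) :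
    indicatorProj C * (∑ f ∈ F, z f • lam Γ f) * indicatorProj C = 0 := by
  simp only [Finset.mul_sum, Finset.sum_mul, mul_smul_comm, smul_mul_assoc]
  exact Finset.sum_eq_zero fun f hf => by
    rw [indicatorProj_mul_lam_mul_indicatorProj (hC f hf), smul_zero]

theorem norm_sum_lamConj_le {ι : Type*} [Fintype ι] {C : Set Γ} {X : l2 Γ →L[ℂ] l2 Γ}
    (hX : indicatorProj C * X * indicatorProj C = 0) {g : ι → Γ}
    (hg : Pairwise fun j k => Disjoint ((g j * ·) '' Cᶜ) ((g k * ·) '' Cᶜ)) :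
    ‖∑ j, lamConj (g j) X‖ ≤ 2 * √(Fintype.card ι) * ‖X‖ := by
  set Q : ι → l2 Γ →L[ℂ] l2 Γ := fun j => indicatorProj ((g j * ·) '' Cᶜ)
  have hsplit : X = indicatorProj Cᶜ * X + indicatorProj C * X * indicatorProj Cᶜ :=
    eq_mul_add_mul_mul_of_mul_mul_eq_zero (indicatorProj_add_indicatorProj_compl C) hX
  have hsplit_conj : ∀ j, lamConj (g j) X
      = Q j * lamConj (g j) X + lamConj (g j) (indicatorProj C * X) * Q j := fun j => by
    conv_lhs => rw [hsplit]
    simp only [map_add, map_mul, lamConj_indicatorProj, Q]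
  have hQ : ∀ j, IsStarProjection (Q j) := fun j => isStarProjection_indicatorProj _
  have horth : Pairwise fun j k => Q j * Q k = 0 := fun j k hjk =>
    indicatorProj_mul_indicatorProj_of_disjoint (hg hjk)
  have hnorm : ∀ j, ‖lamConj (g j) X‖ ≤ ‖X‖ := fun j => (StarAlgEquiv.norm_map _ _).le
  have hnorm' : ∀ j, ‖lamConj (g j) (indicatorProj C * X)‖ ≤ ‖X‖ := fun j => by
    rw [StarAlgEquiv.norm_map]
    exact (norm_mul_le _ _).trans
      (mul_le_of_le_one_left (norm_nonneg _) (isStarProjection_indicatorProj C).norm_le)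
  rw [Finset.sum_congr rfl fun j _ => hsplit_conj j, Finset.sum_add_distrib, two_mul, add_mul]
  exact (norm_add_le _ _).trans (add_le_add (norm_sum_starProjection_mul_le hQ horth hnorm)
    (norm_sum_mul_starProjection_le hQ horth hnorm'))

end PowersEstimate

theorem norm_average_conjugates_le_general {Γ : Type*} [Group Γ]
    (F : Finset Γ) (z : Γ → ℂ)
    (C : Set Γ) (hC : ∀ f ∈ F, (fun x => f * x) '' C ∩ C = ∅)
    (N : ℕ) (g : Fin N → Γ)
    (hdisj : ∀ j k : Fin N, j ≠ k →
      (fun x => g j * x) '' Cᶜ ∩ (fun x => g k * x) '' Cᶜ = ∅) :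
    ‖(N : ℂ)⁻¹ • ∑ j : Fin N, lam Γ (g j) * (∑ f ∈ F, z f • lam Γ f) * lam Γ ((g j)⁻¹)‖
      ≤ 2 / Real.sqrt N * ‖∑ f ∈ F, z f • lam Γ f‖ := by
  set X := ∑ f ∈ F, z f • lam Γ f
  have hsum : ‖∑ j, lamConj (g j) X‖ ≤ 2 * √N * ‖X‖ := by
    simpa only [Fintype.card_fin] using
      norm_sum_lamConj_le (indicatorProj_mul_sum_lam_mul_indicatorProj F z hC)
        fun j k hjk => Set.disjoint_iff_inter_eq_empty.mpr (hdisj j k hjk)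
  calc ‖(N : ℂ)⁻¹ • ∑ j, lamConj (g j) X‖ ≤ (N : ℝ)⁻¹ * (2 * √N * ‖X‖) := by
        rw [norm_smul, norm_inv, Complex.norm_natCast]
        gcongr
    _ = 2 / √N * ‖X‖ := by
        rw [div_eq_mul_one_div 2, ← Real.sqrt_div_self']
        ring

/-- Powers' norm estimate: `‖(1/N) ∑ λ(γ_j) X λ(γ_j)⁻¹‖ ≤ (2/√N) ‖X‖` for
`X = ∑_{f ∈ F} z_f λ(f)`, given a Powers-type partition. -/
theorem norm_average_conjugates_le {Γ : Type*} [Group Γ]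
    (F : Finset Γ) (hF : (1 : Γ) ∉ F) (z : Γ → ℂ)
    (C : Set Γ) (hC : ∀ f ∈ F, (fun x => f * x) '' C ∩ C = ∅)
    (N : ℕ) (hN : 1 ≤ N) (g : Fin N → Γ)
    (hdisj : ∀ j k : Fin N, j ≠ k →
      (fun x => g j * x) '' Cᶜ ∩ (fun x => g k * x) '' Cᶜ = ∅) :
    ‖(N : ℂ)⁻¹ • ∑ j : Fin N, lam Γ (g j) * (∑ f ∈ F, z f • lam Γ f) * lam Γ ((g j)⁻¹)‖
      ≤ 2 / Real.sqrt N * ‖∑ f ∈ F, z f • lam Γ f‖ :=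
  norm_average_conjugates_le_general F z C hC N g hdisj
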